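/- In a Möbius category X, the Möbius function μ = Φ_even − Φ_odd satisfies ζ ∗ μ = δ = μ ∗ ζ in the incidence algebra, where ζ is constantly 1, δ is 1 on identities and 0 elsewhere, and Φ_even, Φ_odd count factorisations of a morphism into an even resp. odd number of non-identity morphisms. -/

import Mathlib

/-!
Write `η = ζ - δ` for the indicator of non-identity morphisms. Splitting off the first factor of a
factorisation gives `Φ_{n+1} = η ∗ Φ_n`; by associativity of `∗` this is also `Φ_n ∗ η`. Hence
`ζ ∗ Φ_n = Φ_n + Φ_{n+1} = Φ_n ∗ ζ`, and since `μ = ∑ (-1)ⁿ Φ_n` has finitely many nonzero terms at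
each morphism, both `ζ ∗ μ` and `μ ∗ ζ` telescope to `Φ_0 = δ`.
-/

open CategoryTheory
open scoped Classical

/-- The set of morphisms of a category, as a sigma type. -/
abbrev Mor (C : Type u) [SmallCategory C] : Type u := Σ x : C, Σ z : C, x ⟶ z

/-- A morphism (as a point of `Mor C`) is an identity. -/
def IsIdMor {C : Type u} [SmallCategory C] (m : Mor C) : Prop := ∃ x : C, m = ⟨x, x, 𝟙 x⟩

/-- Two-step factorisations of a morphism. -/
abbrev TwoStepFact {C : Type u} [SmallCategory C] (m : Mor C) : Type u :=
  Σ y : C, { p : (m.1 ⟶ y) × (y ⟶ m.2.1) // p.1 ≫ p.2 = m.2.2 }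

/-- Factorisations of a morphism into `n` non-identity morphisms. -/
def FactNI (C : Type u) [SmallCategory C] : ℕ → Mor C → Type u
  | 0, m => ULift.{u} (PLift (IsIdMor m))
  | n + 1, m => Σ y : C, Σ g : m.1 ⟶ y, Σ h : y ⟶ m.2.1,
      PLift (g ≫ h = m.2.2 ∧ ¬ IsIdMor (⟨m.1, y, g⟩ : Mor C)) × FactNI C n ⟨y, m.2.1, h⟩

/-- `Φ_n(f)`: the number of factorisations of `f` into `n` non-identity morphisms. -/
noncomputable def Phi (C : Type u) [SmallCategory C] (n : ℕ) (m : Mor C) : ℚ :=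
  (Nat.card (FactNI C n m) : ℚ)

/-- The Möbius function `μ = Φ_even − Φ_odd`. -/
noncomputable def mobiusFn (C : Type u) [SmallCategory C] (m : Mor C) : ℚ :=
  (∑ᶠ n : ℕ, if Even n then Phi C n m else 0) - (∑ᶠ n : ℕ, if Odd n then Phi C n m else 0)

/-- Convolution product in the incidence algebra of a category. -/
noncomputable def conv {C : Type u} [SmallCategory C] (α β : Mor C → ℚ) : Mor C → ℚ :=
  fun m => ∑ᶠ p : TwoStepFact m,
    α ⟨m.1, p.1, p.2.1.1⟩ * β ⟨p.1, m.2.1, p.2.1.2⟩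

/-- The convolution unit: `δ f = 1` on identities and `0` elsewhere. -/
noncomputable def convUnit (C : Type u) [SmallCategory C] : Mor C → ℚ :=
  fun m => if IsIdMor m then 1 else 0

/-- The zeta function, constantly `1`. -/
def zetaFn (C : Type u) [SmallCategory C] : Mor C → ℚ := fun _ => 1

section Alternating

variable {R : Type*} [CommRing R]

theorem finsum_neg_one_pow_mul_add_succ {u : ℕ → R} (hu : u.HasFiniteSupport) :
    ∑ᶠ n, (-1) ^ n * (u n + u (n + 1)) = u 0 := by
  obtain ⟨N, hN⟩ := Set.Finite.bddAbove hu
  have hvanish : ∀ n, N < n → u n = 0 := fun n hn =>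
    Function.notMem_support.mp fun h => (hN h).not_gt hn
  have hsupp : (Function.support fun n => (-1 : R) ^ n * (u n + u (n + 1))) ⊆
      (Finset.range (N + 1) : Set ℕ) := by
    intro n hn
    by_contra hlt
    simp only [Finset.coe_range, Set.mem_Iio, not_lt] at hlt
    simp [hvanish n (by omega), hvanish (n + 1) (by omega)] at hn
  have hterm : ∀ n, (-1 : R) ^ n * (u n + u (n + 1)) =
      (-1) ^ n * u n - (-1) ^ (n + 1) * u (n + 1) := fun n => by ring
  rw [finsum_eq_sum_of_support_subset _ hsupp]
  simp only [hterm, Finset.sum_range_sub', pow_zero, one_mul, hvanish (N + 1) (by omega),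
    mul_zero, sub_zero]

theorem finsum_even_sub_finsum_odd {u : ℕ → R} (hu : u.HasFiniteSupport) :
    (∑ᶠ n, if Even n then u n else 0) - (∑ᶠ n, if Odd n then u n else 0) =
      ∑ᶠ n, (-1) ^ n * u n := by
  have hsub : ∀ (p : ℕ → Prop) [DecidablePred p],
      (Function.support fun n => if p n then u n else 0) ⊆ u.support :=
    fun p _ n hn h => hn (by simp [h])
  rw [← finsum_sub_distrib (Set.Finite.subset hu (hsub _)) (Set.Finite.subset hu (hsub _))]
  refine finsum_congr fun n => ?_
  rcases Nat.even_or_odd n with hn | hn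
  · simp [hn, hn.neg_one_pow, Nat.not_odd_iff_even.mpr hn]
  · simp [hn, hn.neg_one_pow, Nat.not_even_iff_odd.mpr hn]

end Alternating

section IncidenceAlgebra

variable {C : Type u} [SmallCategory C]

theorem isIdMor_id (x : C) : IsIdMor (⟨x, x, 𝟙 x⟩ : Mor C) := ⟨x, rfl⟩

namespace TwoStepFact

variable {m : Mor C}

def left (p : TwoStepFact m) : Mor C := ⟨m.1, p.1, p.2.1.1⟩

def right (p : TwoStepFact m) : Mor C := ⟨p.1, m.2.1, p.2.1.2⟩

def idLeft (m : Mor C) : TwoStepFact m := ⟨m.1, (𝟙 _, m.2.2), Category.id_comp _⟩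

def idRight (m : Mor C) : TwoStepFact m := ⟨m.2.1, (m.2.2, 𝟙 _), Category.comp_id _⟩

theorem eq_idLeft_of_isIdMor_left {p : TwoStepFact m} (h : IsIdMor p.left) : p = idLeft m := by
  obtain ⟨x, z, f⟩ := m
  obtain ⟨y, ⟨g, k⟩, hgk⟩ := p
  obtain ⟨a, ha⟩ := h
  dsimp only [left] at g k ha hgk
  cases ha
  simp only [Category.id_comp] at hgk
  subst hgk
  rfl

theorem eq_idRight_of_isIdMor_right {p : TwoStepFact m} (h : IsIdMor p.right) :
    p = idRight m := by
  obtain ⟨x, z, f⟩ := m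
  obtain ⟨y, ⟨g, k⟩, hgk⟩ := p
  obtain ⟨a, ha⟩ := h
  dsimp only [right] at g k ha hgk
  cases ha
  simp only [Category.comp_id] at hgk
  subst hgk
  rfl

/-- Both sides parametrise the three-step factorisations `g ≫ k ≫ l` of `m`. -/
def assocEquiv (m : Mor C) :
    (Σ p : TwoStepFact m, TwoStepFact p.left) ≃ Σ p : TwoStepFact m, TwoStepFact p.right where
  toFun := fun ⟨⟨z, (_, l), h₁⟩, ⟨y, (g, k), h₂⟩⟩ =>
    ⟨⟨y, (g, k ≫ l), (Category.assoc g k l).symm.trans ((congrArg (· ≫ l) h₂).trans h₁)⟩,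
      ⟨z, (k, l), rfl⟩⟩
  invFun := fun ⟨⟨y, (g, _), h₁⟩, ⟨z, (k, l), h₂⟩⟩ =>
    ⟨⟨z, (g ≫ k, l), (Category.assoc g k l).trans ((congrArg (g ≫ ·) h₂).trans h₁)⟩,
      ⟨y, (g, k), rfl⟩⟩
  left_inv := by
    rintro ⟨⟨z, ⟨_, l⟩, h₁⟩, ⟨y, ⟨g, k⟩, h₂⟩⟩
    dsimp only [left] at g k h₂
    subst h₂
    rfl
  right_inv := by
    rintro ⟨⟨y, ⟨g, _⟩, h₁⟩, ⟨z, ⟨k, l⟩, h₂⟩⟩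
    dsimp only [right] at k l h₂
    subst h₂
    rfl

end TwoStepFact

open TwoStepFact

theorem conv_apply (α β : Mor C → ℚ) (m : Mor C) :
    conv α β m = ∑ᶠ p : TwoStepFact m, α p.left * β p.right := rfl

theorem convUnit_conv (β : Mor C → ℚ) : conv (convUnit C) β = β := by
  funext m
  rw [conv_apply, finsum_eq_single _ (idLeft m)]
  · simp [convUnit, idLeft, left, right, isIdMor_id]
  · intro p hp
    simp only [convUnit, ite_mul, one_mul, zero_mul, ite_eq_right_iff]
    exact fun h => absurd (eq_idLeft_of_isIdMor_left h) hp

theorem conv_convUnit (α : Mor C → ℚ) : conv α (convUnit C) = α := by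
  funext m
  rw [conv_apply, finsum_eq_single _ (idRight m)]
  · simp [convUnit, idRight, left, right, isIdMor_id]
  · intro p hp
    simp only [convUnit, mul_ite, mul_one, mul_zero, ite_eq_right_iff]
    exact fun h => absurd (eq_idRight_of_isIdMor_right h) hp

theorem conv_assoc (hlf : ∀ m : Mor C, Finite (TwoStepFact m)) (α β γ : Mor C → ℚ) :
    conv (conv α β) γ = conv α (conv β γ) := by
  funext m
  have := Fintype.ofFinite (TwoStepFact m)
  have := fun p : TwoStepFact m => Fintype.ofFinite (TwoStepFact p.left)
  have := fun p : TwoStepFact m => Fintype.ofFinite (TwoStepFact p.right)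
  simp only [conv_apply, finsum_eq_sum_of_fintype, Finset.sum_mul, Finset.mul_sum]
  rw [← Fintype.sum_sigma', ← Fintype.sum_sigma']
  refine Fintype.sum_equiv (assocEquiv m) _ _ ?_
  rintro ⟨⟨z, ⟨_, l⟩, h₁⟩, ⟨y, ⟨g, k⟩, h₂⟩⟩
  exact mul_assoc _ _ _

theorem add_conv (hlf : ∀ m : Mor C, Finite (TwoStepFact m)) (α α' β : Mor C → ℚ) :
    conv (α + α') β = conv α β + conv α' β := by
  funext m
  have := hlf m
  simp only [conv_apply, Pi.add_apply, add_mul]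
  exact finsum_add_distrib (Set.toFinite _) (Set.toFinite _)

theorem conv_add (hlf : ∀ m : Mor C, Finite (TwoStepFact m)) (α β β' : Mor C → ℚ) :
    conv α (β + β') = conv α β + conv α β' := by
  funext m
  have := hlf m
  simp only [conv_apply, Pi.add_apply, mul_add]
  exact finsum_add_distrib (Set.toFinite _) (Set.toFinite _)

theorem const_mul_conv (c : ℚ) (α β : Mor C → ℚ) :
    conv (fun m => c * α m) β = fun m => c * conv α β m := by
  funext m
  simp only [conv_apply, mul_finsum, mul_assoc]

theorem conv_const_mul (c : ℚ) (α β : Mor C → ℚ) :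
    conv α (fun m => c * β m) = fun m => c * conv α β m := by
  funext m
  simp only [conv_apply, mul_finsum, mul_left_comm c]

theorem finsum_conv (hlf : ∀ m : Mor C, Finite (TwoStepFact m)) (β : Mor C → ℚ)
    {F : ℕ → Mor C → ℚ} (hF : ∀ m, Function.HasFiniteSupport fun n => F n m) :
    conv (fun m => ∑ᶠ n, F n m) β = fun m => ∑ᶠ n, conv (F n) β m := by
  funext m
  have := Fintype.ofFinite (TwoStepFact m)
  simp only [conv_apply, finsum_eq_sum_of_fintype, finsum_mul]
  exact (finsum_sum_comm _ _ fun p _ => (hF p.left).fun_mul_left _).symm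

theorem conv_finsum (hlf : ∀ m : Mor C, Finite (TwoStepFact m)) (α : Mor C → ℚ)
    {F : ℕ → Mor C → ℚ} (hF : ∀ m, Function.HasFiniteSupport fun n => F n m) :
    conv α (fun m => ∑ᶠ n, F n m) = fun m => ∑ᶠ n, conv α (F n) m := by
  funext m
  have := Fintype.ofFinite (TwoStepFact m)
  simp only [conv_apply, finsum_eq_sum_of_fintype, mul_finsum]
  exact (finsum_sum_comm _ _ fun p _ => (hF p.right).fun_mul_right _).symm

noncomputable def nonIdFn (C : Type u) [SmallCategory C] : Mor C → ℚ :=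
  fun m => if IsIdMor m then 0 else 1

theorem convUnit_add_nonIdFn : convUnit C + nonIdFn C = zetaFn C := by
  funext m
  by_cases h : IsIdMor m <;> simp [convUnit, nonIdFn, zetaFn, h]

theorem zetaFn_conv (hlf : ∀ m : Mor C, Finite (TwoStepFact m)) (β : Mor C → ℚ) :
    conv (zetaFn C) β = β + conv (nonIdFn C) β := by
  rw [← convUnit_add_nonIdFn, add_conv hlf, convUnit_conv]

theorem conv_zetaFn (hlf : ∀ m : Mor C, Finite (TwoStepFact m)) (α : Mor C → ℚ) :
    conv α (zetaFn C) = α + conv α (nonIdFn C) := by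
  rw [← convUnit_add_nonIdFn, conv_add hlf, conv_convUnit]

end IncidenceAlgebra

section Factorisations

variable {C : Type u} [SmallCategory C]

theorem finite_factNI (hMob : ∀ m : Mor C, Finite (Σ n : ℕ, FactNI C n m)) (n : ℕ)
    (m : Mor C) : Finite (FactNI C n m) :=
  have := hMob m
  Finite.of_injective (fun x => (⟨n, x⟩ : Σ k, FactNI C k m))
    fun _ _ h => eq_of_heq (Sigma.mk.inj_iff.mp h).2

theorem phi_hasFiniteSupport (hMob : ∀ m : Mor C, Finite (Σ n : ℕ, FactNI C n m)) (m : Mor C) :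
    Function.HasFiniteSupport fun n => Phi C n m := by
  refine (Set.finite_range (Sigma.fst : (Σ n, FactNI C n m) → ℕ)).subset fun n hn => ?_
  obtain ⟨x⟩ : Nonempty (FactNI C n m) := (Nat.card_ne_zero.mp (by simpa [Phi] using hn)).1
  exact ⟨⟨n, x⟩, rfl⟩

theorem mobiusFn_eq_finsum (hMob : ∀ m : Mor C, Finite (Σ n : ℕ, FactNI C n m)) :
    mobiusFn C = fun m => ∑ᶠ n, (-1) ^ n * Phi C n m :=
  funext fun m => finsum_even_sub_finsum_odd (phi_hasFiniteSupport hMob m)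

theorem phi_zero : Phi C 0 = convUnit C := by
  funext m
  by_cases h : IsIdMor m <;> simp [Phi, FactNI, convUnit, h]

def factNISuccEquiv (n : ℕ) (m : Mor C) :
    FactNI C (n + 1) m ≃ Σ p : TwoStepFact m, PLift (¬ IsIdMor p.left) × FactNI C n p.right where
  toFun x := ⟨⟨x.1, (x.2.1, x.2.2.1), x.2.2.2.1.down.1⟩, ⟨x.2.2.2.1.down.2⟩, x.2.2.2.2⟩
  invFun x := ⟨x.1.1, x.1.2.1.1, x.1.2.1.2, ⟨⟨x.1.2.2, x.2.1.down⟩⟩, x.2.2⟩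
  left_inv _ := rfl
  right_inv _ := rfl

theorem phi_succ_eq_nonIdFn_conv (hlf : ∀ m : Mor C, Finite (TwoStepFact m))
    (hMob : ∀ m : Mor C, Finite (Σ n : ℕ, FactNI C n m)) (n : ℕ) :
    Phi C (n + 1) = conv (nonIdFn C) (Phi C n) := by
  funext m
  have := Fintype.ofFinite (TwoStepFact m)
  have := finite_factNI hMob
  rw [Phi, Nat.card_congr (factNISuccEquiv n m), Nat.card_sigma, conv_apply,
    finsum_eq_sum_of_fintype]
  push_cast
  refine Finset.sum_congr rfl fun p _ => ?_
  by_cases h : IsIdMor p.left <;> simp [Nat.card_prod, nonIdFn, Phi, h]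

theorem phi_succ_eq_conv_nonIdFn (hlf : ∀ m : Mor C, Finite (TwoStepFact m))
    (hMob : ∀ m : Mor C, Finite (Σ n : ℕ, FactNI C n m)) (n : ℕ) :
    Phi C (n + 1) = conv (Phi C n) (nonIdFn C) := by
  induction n with
  | zero => rw [phi_succ_eq_nonIdFn_conv hlf hMob, phi_zero, conv_convUnit, convUnit_conv]
  | succ n ih =>
    rw [phi_succ_eq_nonIdFn_conv hlf hMob (n + 1)]
    conv_lhs => rw [ih]
    rw [← conv_assoc hlf, ← phi_succ_eq_nonIdFn_conv hlf hMob]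

theorem zetaFn_conv_mobiusFn (hlf : ∀ m : Mor C, Finite (TwoStepFact m))
    (hMob : ∀ m : Mor C, Finite (Σ n : ℕ, FactNI C n m)) :
    conv (zetaFn C) (mobiusFn C) = convUnit C := by
  funext m
  rw [mobiusFn_eq_finsum hMob,
    conv_finsum hlf _ fun m => (phi_hasFiniteSupport hMob m).fun_mul_right _]
  simp only [conv_const_mul]
  simp only [zetaFn_conv hlf, ← phi_succ_eq_nonIdFn_conv hlf hMob, Pi.add_apply]
  rw [finsum_neg_one_pow_mul_add_succ (phi_hasFiniteSupport hMob m), phi_zero]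

theorem mobiusFn_conv_zetaFn (hlf : ∀ m : Mor C, Finite (TwoStepFact m))
    (hMob : ∀ m : Mor C, Finite (Σ n : ℕ, FactNI C n m)) :
    conv (mobiusFn C) (zetaFn C) = convUnit C := by
  funext m
  rw [mobiusFn_eq_finsum hMob,
    finsum_conv hlf _ fun m => (phi_hasFiniteSupport hMob m).fun_mul_right _]
  simp only [const_mul_conv]
  simp only [conv_zetaFn hlf, ← phi_succ_eq_conv_nonIdFn hlf hMob, Pi.add_apply]
  rw [finsum_neg_one_pow_mul_add_succ (phi_hasFiniteSupport hMob m), phi_zero]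

end Factorisations

/-- In a Möbius category, `ζ ∗ μ = δ = μ ∗ ζ`, where `μ = Φ_even − Φ_odd`. -/
theorem mobius_inversion_mobius_category (C : Type u) [SmallCategory C]
    (hlf : ∀ m : Mor C, Finite (TwoStepFact m))
    (hMob : ∀ m : Mor C, Finite (Σ n : ℕ, FactNI C n m)) :
    conv (zetaFn C) (mobiusFn C) = convUnit C ∧
    conv (mobiusFn C) (zetaFn C) = convUnit C :=
  ⟨zetaFn_conv_mobiusFn hlf hMob, mobiusFn_conv_zetaFn hlf hMob⟩
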